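/- Every labeled forest X of length ℓ(X)=l≥1 admits a factorization X = X_1 • X_2 • ⋯ • X_l in which every factor X_i is a labeled forest of length one, and this factorization is unique: if X = X_1•⋯•X_l = X'_1•⋯•X'_l with all X_i and X'_i of length one, then X_i = X'_i for all 1≤i≤l. -/

import Mathlib

set_option maxHeartbeats 1000000

/-! # Common definitions: trees, forests, descent algebras -/

/-- Labeled binary trees: leaves carry a natural number (positive in valid forests),
internal nodes carry a label. -/
inductive LTree : Type
  | leaf : ℕ → LTree
  | node : ℕ → LTree → LTree → LTree
  deriving DecidableEq

instance : Inhabited LTree := ⟨LTree.leaf 1⟩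

/-- Unlabeled binary trees with natural number leaves. -/
inductive UTree : Type
  | leaf : ℕ → UTree
  | node : UTree → UTree → UTree
  deriving DecidableEq

instance : Inhabited UTree := ⟨UTree.leaf 1⟩

namespace LTree

/-- The value of a tree: the sum of its leaf entries. -/
def value : LTree → ℕ
  | leaf x => x
  | node _ t1 t2 => t1.value + t2.value

/-- The foliage of a tree: the list of its leaf entries, left to right. -/
def foliage : LTree → List ℕ
  | leaf x => [x]
  | node _ t1 t2 => t1.foliage ++ t2.foliage

/-- The number of internal nodes. -/
def numNodes : LTree → ℕ
  | leaf _ => 0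
  | node _ t1 t2 => t1.numNodes + t2.numNodes + 1

/-- The list of node labels (in preorder). -/
def labels : LTree → List ℕ
  | leaf _ => []
  | node i t1 t2 => i :: (t1.labels ++ t2.labels)

/-- Labels strictly increase downwards, starting above `p`. -/
def incrFrom : ℕ → LTree → Prop
  | _, leaf _ => True
  | p, node i t1 t2 => p < i ∧ incrFrom i t1 ∧ incrFrom i t2

/-- Shift all node labels up by `m`. -/
def shift (m : ℕ) : LTree → LTree
  | leaf x => leaf x
  | node i t1 t2 => node (i + m) (t1.shift m) (t2.shift m)

/-- Decrease all node labels by one. -/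
def dec : LTree → LTree
  | leaf x => leaf x
  | node i t1 t2 => node (i - 1) t1.dec t2.dec

/-- A tree is aligned if at every node the value of the left subtree is
strictly smaller than the value of the right subtree. -/
def Aligned : LTree → Prop
  | leaf _ => True
  | node _ t1 t2 => t1.value < t2.value ∧ t1.Aligned ∧ t2.Aligned

/-- Replace the leaves of a tree (left to right) by the trees from the supplied list;
returns the new tree together with the unused trees. -/
def graft : LTree → List LTree → LTree × List LTree
  | leaf x, [] => (leaf x, [])
  | leaf _, t :: ts => (t, ts)
  | node i t1 t2, ts =>
    let p1 := t1.graft ts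
    let p2 := t2.graft p1.2
    (node i p1.1 p2.1, p2.2)

/-- Find the node with label `i` and return the values of its two subtrees. -/
def findLab (i : ℕ) : LTree → Option (ℕ × ℕ)
  | leaf _ => none
  | node j t1 t2 =>
    if j = i then some (t1.value, t2.value)
    else (t1.findLab i).orElse (fun _ => t2.findLab i)

/-- The label at the root, if the tree is a node. -/
def rootLabel? : LTree → Option ℕ
  | leaf _ => none
  | node i _ _ => some i

/-- The subtree at a position (list of booleans; `false` = left, `true` = right). -/
def subtreeAt : LTree → List Bool → Option LTree
  | t, [] => some t
  | leaf _, _ :: _ => none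
  | node _ t1 t2, b :: p => (if b then t2 else t1).subtreeAt p

/-- Replace the subtree at a position. -/
def replaceAt : LTree → List Bool → LTree → LTree
  | _, [], u => u
  | leaf x, _ :: _, _ => leaf x
  | node i t1 t2, b :: p, u =>
    if b then node i t1 (t2.replaceAt p u) else node i (t1.replaceAt p u) t2

end LTree

namespace UTree

/-- The value of an unlabeled tree. -/
def value : UTree → ℕ
  | leaf x => x
  | node t1 t2 => t1.value + t2.value

/-- The foliage of an unlabeled tree. -/
def foliage : UTree → List ℕ
  | leaf x => [x]
  | node t1 t2 => t1.foliage ++ t2.foliage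

/-- The number of internal nodes. -/
def numNodes : UTree → ℕ
  | leaf _ => 0
  | node t1 t2 => t1.numNodes + t2.numNodes + 1

/-- All leaf entries are positive. -/
def leavesPos : UTree → Prop
  | leaf x => 0 < x
  | node t1 t2 => t1.leavesPos ∧ t2.leavesPos

/-- An unlabeled tree is aligned if at every node the left value is smaller
than the right value. -/
def Aligned : UTree → Prop
  | leaf _ => True
  | node t1 t2 => t1.value < t2.value ∧ t1.Aligned ∧ t2.Aligned

/-- No node has two leaf children bearing the same value. -/
def NoTwin : UTree → Prop
  | leaf _ => True
  | node t1 t2 => t1.NoTwin ∧ t2.NoTwin ∧ ¬ ∃ a, t1 = leaf a ∧ t2 = leaf a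

/-- Graft: replace leaves (left to right) by trees from the supplied list. -/
def graft : UTree → List UTree → UTree × List UTree
  | leaf x, [] => (leaf x, [])
  | leaf _, t :: ts => (t, ts)
  | node t1 t2, ts =>
    let p1 := t1.graft ts
    let p2 := t2.graft p1.2
    (node p1.1 p2.1, p2.2)

/-- The total order on unlabeled trees: compare values, then (reversed) number of
nodes, then recursively the left and right subtrees. -/
def ltt : UTree → UTree → Prop
  | leaf a, leaf b => a < b
  | leaf a, node y1 y2 => a < (node y1 y2).value
  | node x1 x2, leaf b => (node x1 x2).value ≤ b
  | node x1 x2, node y1 y2 =>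
      (node x1 x2).value < (node y1 y2).value ∨
      ((node x1 x2).value = (node y1 y2).value ∧
        ((node y1 y2).numNodes < (node x1 x2).numNodes ∨
          ((node x1 x2).numNodes = (node y1 y2).numNodes ∧
            (ltt x1 y1 ∨ (x1 = y1 ∧ ltt x2 y2)))))

end UTree

/-- Erase the node labels of a labeled tree. -/
def eraseT : LTree → UTree
  | .leaf x => .leaf x
  | .node _ t1 t2 => .node (eraseT t1) (eraseT t2)

/-! ## Labeled forests -/

/-- The squash of a forest: the list of values of its trees. -/
def squash (X : List LTree) : List ℕ := X.map LTree.value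

/-- The foliage of a forest. -/
def forestFoliage (X : List LTree) : List ℕ := X.flatMap LTree.foliage

/-- The length of a forest: its total number of nodes. -/
def forestLen (X : List LTree) : ℕ := (X.map LTree.numNodes).sum

/-- The value of a forest: the sum of the values of its trees. -/
def forestValue (X : List LTree) : ℕ := (X.map LTree.value).sum

/-- All node labels of a forest. -/
def forestLabels (X : List LTree) : List ℕ := X.flatMap LTree.labels

/-- A list of labeled trees is a labeled forest if every node's label exceeds that
of its parent, the labels used are exactly `1, 2, …, l` where `l` is the number
of nodes, and all leaves are positive. -/
def IsLForest (X : List LTree) : Prop :=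
  (∀ t ∈ X, t.incrFrom 0) ∧
  (forestLabels X).Perm (List.range' 1 (forestLen X)) ∧
  ∀ x ∈ forestFoliage X, 0 < x

/-- A forest is aligned if all its trees are. -/
def ForestAligned (X : List LTree) : Prop := ∀ t ∈ X, t.Aligned

/-- Replace the leaves of the forest `X` (left to right) by the trees of `ys`. -/
def graftForest : List LTree → List LTree → List LTree
  | [], _ => []
  | t :: ts, ys =>
    let p := t.graft ys
    p.1 :: graftForest ts p.2

/-- The product `X • Y` of labeled forests: replace the `i`-th leaf of `X` by the
`i`-th tree of `Y`, after shifting all node labels of `Y` up by `ℓ(X)`.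
(Meaningful when the foliage of `X` equals the squash of `Y`.) -/
def bullet (X Y : List LTree) : List LTree :=
  graftForest X (Y.map (LTree.shift (forestLen X)))

/-- The forest of leaves determined by a composition. -/
def leavesOf (c : List ℕ) : List LTree := c.map LTree.leaf

/-- Iterated product `X₁ • (X₂ • (⋯ • Xₗ))` of a list of forests. -/
def chainProd : List (List LTree) → List LTree
  | [] => []
  | [A] => A
  | A :: F => bullet A (chainProd F)

/-- Find the node with label `i` in a forest; return the values of its subtrees. -/
def forestFindLab (i : ℕ) : List LTree → Option (ℕ × ℕ)
  | [] => none
  | t :: r => (t.findLab i).orElse (fun _ => forestFindLab i r)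

/-! ## Unlabeled forests -/

def squashU (X : List UTree) : List ℕ := X.map UTree.value
def foliageU (X : List UTree) : List ℕ := X.flatMap UTree.foliage
def forestLenU (X : List UTree) : ℕ := (X.map UTree.numNodes).sum
def forestValueU (X : List UTree) : ℕ := (X.map UTree.value).sum

/-- An unlabeled forest is valid when all its leaves are positive. -/
def IsUForest (X : List UTree) : Prop := ∀ x ∈ foliageU X, 0 < x

def ForestAlignedU (X : List UTree) : Prop := ∀ t ∈ X, t.Aligned

def graftForestU : List UTree → List UTree → List UTree
  | [], _ => []
  | t :: ts, ys =>
    let p := t.graft ys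
    p.1 :: graftForestU ts p.2

/-- The product of unlabeled forests (no label adjustment needed). -/
def bulletU (X Y : List UTree) : List UTree := graftForestU X Y

/-- Erase all node labels of a labeled forest. -/
def eraseF (X : List LTree) : List UTree := X.map eraseT
/-! ## The difference operator δ and the map Δ -/

/-- Locate the part of the forest whose root is the node labeled `1`; return its
(0-based) index together with the forest obtained by splitting that part into its
two subtrees. -/
def splitAt1 : List LTree → Option (ℕ × List LTree)
  | [] => none
  | LTree.node i t1 t2 :: rest =>
      if i = 1 then some (0, t1 :: t2 :: rest)
      else (splitAt1 rest).map (fun p => (p.1 + 1, LTree.node i t1 t2 :: p.2))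
  | LTree.leaf x :: rest => (splitAt1 rest).map (fun p => (p.1 + 1, LTree.leaf x :: p.2))

/-- Swap the entries in positions `i` and `i+1` (0-based) of a list. -/
def swapAdj {α : Type} : ℕ → List α → List α
  | 0, a :: b :: r => b :: a :: r
  | n + 1, a :: r => a :: swapAdj n r
  | _, l => l

/-- The difference operator `δ` on the span of labeled forests: if `ℓ(X) = 0` then
`δ(X) = X`; otherwise, if the node labeled 1 is the root of the `i`-th part with
subtrees `X₁, X₂`, then `δ(X) = Y − Y.(i,i+1)` where `Y` is obtained by replacing
the `i`-th part by the parts `X₁ X₂` and decreasing all labels by one. -/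
noncomputable def deltaF (k : Type) [Ring k] (X : List LTree) : (List LTree) →₀ k :=
  match splitAt1 X with
  | none => Finsupp.single X 1
  | some (i, Y) =>
      Finsupp.single (Y.map LTree.dec) 1 - Finsupp.single (swapAdj i (Y.map LTree.dec)) 1

/-- The linear extension of `δ`. -/
noncomputable def deltaLin (k : Type) [Ring k] :
    ((List LTree) →₀ k) →ₗ[k] ((List LTree) →₀ k) :=
  (Finsupp.lift ((List LTree) →₀ k) k (List LTree)) (deltaF k)

/-- `Δ(X) = δ^{ℓ(X)}(X)`, recorded as an element of the free associative algebra
with basis the compositions (identifying a forest of length 0 with its foliage). -/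
noncomputable def DeltaComp (k : Type) [Ring k] (X : List LTree) : (List ℕ) →₀ k :=
  Finsupp.mapDomain forestFoliage
    ((fun v => deltaLin k v)^[forestLen X] (Finsupp.single X 1))

/-- The linear map `Δ : kL → kℕ*`. -/
noncomputable def DeltaMap (k : Type) [Ring k] : ((List LTree) →₀ k) →ₗ[k] ((List ℕ) →₀ k) :=
  (Finsupp.lift ((List ℕ) →₀ k) k (List LTree)) (DeltaComp k)

/-! ## Pólya orbit sums and products on the spans -/

/-- The Pólya orbit sum `[X]` of a labeled forest: the sum of all distinct
rearrangements of its parts. -/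
noncomputable def pol (k : Type) [Semiring k] (X : List LTree) : (List LTree) →₀ k :=
  ∑ Y ∈ X.permutations.toFinset, Finsupp.single Y 1

/-- The Pólya orbit sum of an unlabeled forest. -/
noncomputable def polU (k : Type) [Semiring k] (X : List UTree) : (List UTree) →₀ k :=
  ∑ Y ∈ X.permutations.toFinset, Finsupp.single Y 1

/-- The bilinear product on `kL`: `X • Y` when foliage of `X` equals squash of `Y`,
and `0` otherwise. -/
noncomputable def mulL (k : Type) [Semiring k] (f g : (List LTree) →₀ k) : (List LTree) →₀ k :=
  f.sum fun X a => g.sum fun Y b =>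
    if forestFoliage X = squash Y then Finsupp.single (bullet X Y) (a * b) else 0

/-- The bilinear product on `kM` (unlabeled forests). -/
noncomputable def mulM (k : Type) [Semiring k] (f g : (List UTree) →₀ k) : (List UTree) →₀ k :=
  f.sum fun X a => g.sum fun Y b =>
    if foliageU X = squashU Y then Finsupp.single (bulletU X Y) (a * b) else 0

/-- The concatenation product on `kM`. -/
noncomputable def mulCat (k : Type) [Semiring k] (f g : (List UTree) →₀ k) : (List UTree) →₀ k :=
  f.sum fun X a => g.sum fun Y b => Finsupp.single (X ++ Y) (a * b)

/-- The product on the free associative algebra `kℕ*` (concatenation of compositions). -/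
noncomputable def mulComp (k : Type) [Semiring k] (f g : (List ℕ) →₀ k) : (List ℕ) →₀ k :=
  f.sum fun u a => g.sum fun v b => Finsupp.single (u ++ v) (a * b)

/-- The linear map `E : kL → kM` erasing node labels. -/
noncomputable def EL (k : Type) [Semiring k] : ((List LTree) →₀ k) →ₗ[k] ((List UTree) →₀ k) :=
  Finsupp.lmapDomain k k eraseF

/-- `π` on a single unlabeled tree: replace every node by the Lie bracket. -/
noncomputable def piT (k : Type) [Ring k] : UTree → (List ℕ) →₀ k
  | .leaf x => Finsupp.single [x] 1
  | .node t1 t2 => mulComp k (piT k t1) (piT k t2) - mulComp k (piT k t2) (piT k t1)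

/-- `π` on an unlabeled forest: the concatenation product of the images of its parts. -/
noncomputable def piF (k : Type) [Ring k] (X : List UTree) : (List ℕ) →₀ k :=
  (X.map (piT k)).foldr (mulComp k) (Finsupp.single [] 1)

/-- The Pólya action of a permutation of `Fin j` on a list: the entry in position
`i` of the result is the entry in position `σ⁻¹ i` of the input. -/
def permuteL {α : Type} [Inhabited α] {j : ℕ} (σ : Equiv.Perm (Fin j)) (X : List α) :
    List α :=
  List.ofFn fun i => X.getD ((σ⁻¹ i : Fin j) : ℕ) default
/-! ## The quiver Q, its paths, and the map ι -/

/-- The partition obtained by splitting one part `a+b` into parts `a` and `b`. -/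
def applyStep (a b : ℕ) (p : Multiset ℕ) : Multiset ℕ := a ::ₘ b ::ₘ p.erase (a + b)

/-- The vertex reached from `p` after performing the given splitting steps. -/
def sourceAfter (p : Multiset ℕ) (steps : List (ℕ × ℕ)) : Multiset ℕ :=
  steps.foldl (fun q s => applyStep s.1 s.2 q) p

/-- A path in the quiver `Q`, recorded by its destination vertex (a partition,
i.e. a multiset of parts) together with the list of branch symbols `[aᵢ|bᵢ]`
read from the destination towards the source. -/
structure QPath where
  dest : Multiset ℕ
  steps : List (ℕ × ℕ)
  deriving DecidableEq

/-- Each step is applicable in turn. -/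
def SeqOK : Multiset ℕ → List (ℕ × ℕ) → Prop
  | _, [] => True
  | p, s :: rest => s.1 + s.2 ∈ p ∧ SeqOK (applyStep s.1 s.2 p) rest

/-- A valid path of `Q`: positive parts, each step `[a|b]` has `0 < a < b`, and the
steps apply in sequence. -/
def QPath.Valid (P : QPath) : Prop :=
  (∀ x ∈ P.dest, 0 < x) ∧ (∀ s ∈ P.steps, 0 < s.1 ∧ s.1 < s.2) ∧ SeqOK P.dest P.steps

/-- The source vertex of a path. -/
def QPath.source (P : QPath) : Multiset ℕ := sourceAfter P.dest P.steps

/-- The canonical length-one forest attached to the edge with destination `q`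
splitting a part `a + b` into `a` and `b`. -/
noncomputable def edgeForest (a b : ℕ) (q : Multiset ℕ) : List LTree :=
  LTree.node 1 (LTree.leaf a) (LTree.leaf b) :: leavesOf (q.erase (a + b)).toList

/-- `ι` on the path with destination `p` and branch symbols `steps`:
the product (in `kℒ`) of the orbit sums of the edge forests, with the edge nearest
the destination leftmost, times the orbit sum of the source vertex. -/
noncomputable def iotaSteps (k : Type) [Semiring k] :
    Multiset ℕ → List (ℕ × ℕ) → ((List LTree) →₀ k)
  | p, [] => pol k (leavesOf p.toList)
  | p, s :: rest =>
      mulL k (pol k (edgeForest s.1 s.2 p)) (iotaSteps k (applyStep s.1 s.2 p) rest)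

/-- `ι` of a single path. -/
noncomputable def iotaP (k : Type) [Semiring k] (P : QPath) : (List LTree) →₀ k :=
  iotaSteps k P.dest P.steps

/-- The linear extension `ι : kQ → kℒ`. -/
noncomputable def iotaLinM (k : Type) [Semiring k] : (QPath →₀ k) →ₗ[k] ((List LTree) →₀ k) :=
  (Finsupp.lift ((List LTree) →₀ k) k QPath) (iotaP k)

/-! ## The branch monoid and its actions -/

/-- All ways to replace one leaf of value `a+b` in a tree by a node labeled `lab`
with leaves `a` and `b`. -/
def branchActTree (a b lab : ℕ) : LTree → List LTree
  | .leaf x =>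
      if x = a + b then [LTree.node lab (LTree.leaf a) (LTree.leaf b)] else []
  | .node i t1 t2 =>
      (branchActTree a b lab t1).map (fun u => LTree.node i u t2) ++
      (branchActTree a b lab t2).map (fun u => LTree.node i t1 u)

/-- All ways to replace one leaf of value `a+b` in a forest by a node labeled `lab`. -/
def branchWays (a b lab : ℕ) : List LTree → List (List LTree)
  | [] => []
  | t :: rest =>
      (branchActTree a b lab t).map (· :: rest) ++
      (branchWays a b lab rest).map (t :: ·)

/-- The action of the branch symbol `[a|b]` on `kL`. -/
noncomputable def actL1 (k : Type) [Semiring k] (s : ℕ × ℕ) (x : (List LTree) →₀ k) :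
    (List LTree) →₀ k :=
  x.sum fun X a =>
    a • ((branchWays s.1 s.2 (forestLen X + 1) X).map
      (fun Y => Finsupp.single Y (1 : k))).sum

/-- The action of a word of the branch monoid `ℬ*` on `kL`. -/
noncomputable def actLW (k : Type) [Semiring k] (w : List (ℕ × ℕ)) (x : (List LTree) →₀ k) :
    (List LTree) →₀ k :=
  w.foldl (fun y s => actL1 k s y) x

/-- The action of the branch symbol `[a|b]` on `kQ`: prepend an edge at the source
if the source has a part `a + b`, and `0` otherwise. -/
noncomputable def actQ1 (k : Type) [Semiring k] (s : ℕ × ℕ) (x : QPath →₀ k) : QPath →₀ k :=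
  x.sum fun P a =>
    if s.1 + s.2 ∈ P.source then Finsupp.single ⟨P.dest, P.steps ++ [s]⟩ a else 0

/-- The action of a word of `ℬ*` on `kQ`. -/
noncomputable def actQW (k : Type) [Semiring k] (w : List (ℕ × ℕ)) (x : QPath →₀ k) :
    QPath →₀ k :=
  w.foldl (fun y s => actQ1 k s y) x

/-- The path `𝔭(X)` associated to an (aligned) labeled forest `X`: the destination is
the partition of the squash of `X`, and the `i`-th branch symbol records the values of
the two subtrees of the node labeled `i`. -/
noncomputable def pPath (X : List LTree) : QPath :=
  ⟨(squash X : Multiset ℕ),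
    (List.range (forestLen X)).map fun i => (forestFindLab (i + 1) X).getD (0, 0)⟩
/-! ## The equivalence ∼ on labeled forests -/

/-- The subtree of a forest at a position (part index, path in the part). -/
def forestSubtreeAt (X : List LTree) (q : ℕ × List Bool) : Option LTree :=
  if h : q.1 < X.length then (X.get ⟨q.1, h⟩).subtreeAt q.2 else none

/-- Replace the subtree at a position of a forest. -/
def forestReplaceAt (X : List LTree) (q : ℕ × List Bool) (u : LTree) : List LTree :=
  X.set q.1 ((X.getD q.1 default).replaceAt q.2 u)

/-- The label of the parent node of the position `q`, if it exists. -/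
def parentLabel (X : List LTree) (q : ℕ × List Bool) : Option ℕ :=
  if q.2 = [] then none
  else (forestSubtreeAt X (q.1, q.2.dropLast)).bind LTree.rootLabel?

/-- Two positions address disjoint subtrees. -/
def PosDisjoint (q r : ℕ × List Bool) : Prop :=
  q.1 ≠ r.1 ∨ (q.1 = r.1 ∧ ¬ q.2 <+: r.2 ∧ ¬ r.2 <+: q.2)

/-- Move (1): exchange two disjoint non-leaf subtrees `U`, `V` of equal value such that
the labels of the parents of `U` and `V` (where these exist) are smaller than the root
labels of `U` and `V`. -/
def Move1 (X Y : List LTree) : Prop :=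
  ∃ (q r : ℕ × List Bool) (U V : LTree),
    PosDisjoint q r ∧
    forestSubtreeAt X q = some U ∧ forestSubtreeAt X r = some V ∧
    U.rootLabel?.isSome ∧ V.rootLabel?.isSome ∧
    U.value = V.value ∧
    (∀ m, (parentLabel X q = some m ∨ parentLabel X r = some m) →
      ∀ j, (U.rootLabel? = some j ∨ V.rootLabel? = some j) → m < j) ∧
    Y = forestReplaceAt (forestReplaceAt X q V) r U

/-- Exchange the entries in positions `i` and `j` of a list. -/
def swapEntries (X : List LTree) (i j : ℕ) : List LTree :=
  (X.set i (X.getD j default)).set j (X.getD i default)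

/-- Move (2): exchange two parts of a forest. -/
def Move2 (X Y : List LTree) : Prop :=
  ∃ i j, i < j ∧ j < X.length ∧ Y = swapEntries X i j

/-- The equivalence relation `∼` generated by the two kinds of moves. -/
def SimRel : List LTree → List LTree → Prop :=
  Relation.ReflTransGen (fun A B => Move1 A B ∨ Move2 A B)

/-! ## The labeling map F -/

/-- Preorder labeling of an unlabeled tree, starting after label `s`; returns the
labeled tree and the last label used. -/
def labelTreeAux : ℕ → UTree → LTree × ℕ
  | s, .leaf x => (LTree.leaf x, s)
  | s, .node t1 t2 =>
    let p1 := labelTreeAux (s + 1) t1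
    let p2 := labelTreeAux p1.2 t2
    (LTree.node (s + 1) p1.1 p2.1, p2.2)

def labelFAux : ℕ → List UTree → List LTree
  | _, [] => []
  | s, t :: r =>
    let p := labelTreeAux s t
    p.1 :: labelFAux p.2 r

/-- The labeled forest `F(X)`: label the nodes of each part in prefix (preorder)
order, the nodes of each part receiving smaller labels than those of later parts. -/
def labelF (X : List UTree) : List LTree := labelFAux 0 X

/-! ## Compositions from subsets, and alleys -/

/-- The composition of `n` attached to a subset `J ⊆ {1, …, n−1}`: the list of
successive differences of `{0, n} ∪ (S ∖ J)`. -/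
def phi (n : ℕ) (J : Finset ℕ) : List ℕ :=
  let ts := ((Finset.Icc 1 (n - 1)) \ J).sort (· ≤ ·)
  List.zipWith (fun a b => b - a) (0 :: ts) (ts ++ [n])

/-- The start of the maximal block of consecutive points containing `i` linked by
the transpositions in `J` (the transposition `s` links `s` and `s+1`). -/
def bStart (J : Finset ℕ) : ℕ → ℕ
  | 0 => 0
  | 1 => 1
  | i + 2 => if (i + 1) ∈ J then bStart J (i + 1) else i + 2

/-- The end of the maximal block of consecutive points of `{1, …, n}` containing `i`
linked by the transpositions in `J`. -/
def bEnd (J : Finset ℕ) (n : ℕ) (i : ℕ) : ℕ :=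
  if h : i < n ∧ i ∈ J then bEnd J n (i + 1) else i
termination_by n - i
decreasing_by
  have := h.1
  omega

/-- The longest element `w_J` of the parabolic subgroup `W_J ≤ Sₙ`, described
explicitly as the permutation of `{1, …, n}` reversing each maximal block of
consecutive points linked by the transpositions in `J`. -/
def wJpt (n : ℕ) (J : Finset ℕ) (i : ℕ) : ℕ := bStart J i + bEnd J n i - i

/-- The permutation `ω = w_J ⬝ w_{J ∪ {t}}` (as a right action on points). -/
def omegaPt (n : ℕ) (J : Finset ℕ) (t : ℕ) (i : ℕ) : ℕ :=
  wJpt n (insert t J) (wJpt n J i)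

/-- The conjugate `s^ω` of the Coxeter generator `s` by `ω = w_J w_{J∪{t}}`:
the generator whose transposition exchanges the images of `s` and `s+1`. -/
def conjGen (n : ℕ) (J : Finset ℕ) (t : ℕ) (s : ℕ) : ℕ :=
  min (omegaPt n J t s) (omegaPt n J t (s + 1))

/-- An alley `(J; s₁, …, s_l)`. -/
structure Alley where
  J : Finset ℕ
  s : List ℕ
  deriving DecidableEq

/-- A valid alley for `Sₙ`: `J ⊆ S = {1, …, n−1}` and `s₁, …, s_l` are distinct
elements of `J`. -/
def IsAlley (n : ℕ) (a : Alley) : Prop :=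
  a.J ⊆ Finset.Icc 1 (n - 1) ∧ a.s.Nodup ∧ ∀ x ∈ a.s, x ∈ a.J

/-- The action of the Coxeter generator `t` on an alley:
`(J; s₁, …, s_l).t = (J^ω; s₁^ω, …, s_l^ω)` where `ω = w_J w_{J∪{t}}`. -/
def actAlley (n : ℕ) (t : ℕ) (a : Alley) : Alley :=
  ⟨a.J.image (conjGen n a.J t), a.s.map (conjGen n a.J t)⟩

/-- The action of a word of the free monoid `S*` on alleys. -/
def actWordA (n : ℕ) (a : Alley) (w : List ℕ) : Alley :=
  w.foldl (fun b t => actAlley n t b) a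

/-- The defining property of the forest `φ(a)` attached to an alley `a = (J; s₁,…,s_l)`:
it is a labeled forest of length `l` admitting a factorization `X₁ • ⋯ • X_l` into
length-one forests with `s(Xᵢ) = φ(J ∖ {s₁,…,s_{i−1}})` and
`f(Xᵢ) = φ(J ∖ {s₁,…,sᵢ})`; for `l = 0` it is the forest of leaves `φ(J)`. -/
def AlleySpec (n : ℕ) (a : Alley) (X : List LTree) : Prop :=
  IsLForest X ∧ forestLen X = a.s.length ∧
  ∃ F : List (List LTree), F.length = a.s.length ∧
    (∀ A ∈ F, IsLForest A ∧ forestLen A = 1) ∧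
    (∀ (i : ℕ) (h : i < F.length),
      squash (F.get ⟨i, h⟩) = phi n (a.J \ (a.s.take i).toFinset) ∧
      forestFoliage (F.get ⟨i, h⟩) = phi n (a.J \ (a.s.take (i + 1)).toFinset)) ∧
    X = F.foldr bullet (leavesOf (phi n (a.J \ a.s.toFinset)))
/-! ## The descent algebra of the symmetric group -/

/-- `w ∈ X_J`: every descent of `w` (viewing `w` as a permutation of `{1, …, n}`
via `Fin n`) occurs at a position belonging to `J`. -/
def DescAllowed (n : ℕ) (J : Finset ℕ) (w : Equiv.Perm (Fin n)) : Prop :=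
  ∀ i j : Fin n, (i : ℕ) + 1 = (j : ℕ) → w j < w i → ((i : ℕ) + 1) ∈ J

open Classical in
/-- The element `x_J = ∑_{w ∈ X_J} w` of the group algebra of `Sₙ`. -/
noncomputable def xJelt (k : Type) [Semiring k] (n : ℕ) (J : Finset ℕ) :
    MonoidAlgebra k (Equiv.Perm (Fin n)) :=
  ∑ w : Equiv.Perm (Fin n),
    if DescAllowed n J w then MonoidAlgebra.single w 1 else 0

/-- The descent algebra `Σ(Sₙ)` as a submodule (by Solomon's theorem, a subalgebra)
of the group algebra: the span of the `x_J`, `J ⊆ S`. -/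
noncomputable def descentSpan (k : Type) [Semiring k] (n : ℕ) :
    Submodule k (MonoidAlgebra k (Equiv.Perm (Fin n))) :=
  Submodule.span k {x | ∃ J ⊆ Finset.Icc 1 (n - 1), x = xJelt k n J}

/-! ## Spans -/

/-- `kℒₙ`: the span of Pólya orbit sums of labeled forests of value `n`. -/
noncomputable def LspanN (k : Type) [Semiring k] (n : ℕ) :
    Submodule k ((List LTree) →₀ k) :=
  Submodule.span k {y | ∃ X, IsLForest X ∧ forestValue X = n ∧ y = pol k X}

/-- `kℒ`: the span of Pólya orbit sums of labeled forests. -/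
noncomputable def LspanAll (k : Type) [Semiring k] : Submodule k ((List LTree) →₀ k) :=
  Submodule.span k {y | ∃ X, IsLForest X ∧ y = pol k X}

/-- `kℳ`: the span of Pólya orbit sums of unlabeled forests. -/
noncomputable def MspanAll (k : Type) [Semiring k] : Submodule k ((List UTree) →₀ k) :=
  Submodule.span k {y | ∃ X, IsUForest X ∧ y = polU k X}

/-- `kℒ⁺`: the span of Pólya orbit sums of aligned labeled forests. -/
noncomputable def LplusSpan (k : Type) [Semiring k] : Submodule k ((List LTree) →₀ k) :=
  Submodule.span k {y | ∃ X, IsLForest X ∧ ForestAligned X ∧ y = pol k X}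

/-- `kM⁺`: the span of aligned unlabeled forests. -/
noncomputable def MplusSpan (k : Type) [Semiring k] : Submodule k ((List UTree) →₀ k) :=
  Submodule.span k {y | ∃ X, IsUForest X ∧ ForestAlignedU X ∧ y = Finsupp.single X (1 : k)}

/-- The identity element of `kLₙ`: the sum of all compositions of `n`. -/
noncomputable def unitL (k : Type) [Semiring k] (n : ℕ) : (List LTree) →₀ k :=
  ∑ c : Composition n, Finsupp.single (leavesOf c.blocks) 1

/-- `kQₙ`: the span of the valid paths of the quiver `Qₙ` (partitions of `n`). -/
noncomputable def QspanN (k : Type) [Semiring k] (n : ℕ) : Submodule k (QPath →₀ k) :=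
  Submodule.span k
    {y | ∃ P : QPath, P.Valid ∧ P.dest.sum = n ∧ y = Finsupp.single P 1}

/-- The path-algebra product on `kQ`: the concatenation "`P` then `F`" when the
destination of `P` is the source of `F`, and `0` otherwise. -/
noncomputable def mulQ (k : Type) [Semiring k] (f g : QPath →₀ k) : QPath →₀ k :=
  f.sum fun P a => g.sum fun F b =>
    if F.source = P.dest then Finsupp.single ⟨F.dest, F.steps ++ P.steps⟩ (a * b) else 0

/-! ## The ideals 𝒩 and 𝒥 -/

/-- The generators of the ideal `𝒩`: `(U,V) + (V,U)`. -/
def NGens (k : Type) [Semiring k] : Set ((List UTree) →₀ k) :=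
  {g | ∃ U V : UTree, U.leavesPos ∧ V.leavesPos ∧
    g = Finsupp.single [UTree.node U V] 1 + Finsupp.single [UTree.node V U] 1}

/-- The generators of the ideal `𝒥`: the Jacobi sums
`(X,(Y,Z)) + (Y,(Z,X)) + (Z,(X,Y))`. -/
def JGens (k : Type) [Semiring k] : Set ((List UTree) →₀ k) :=
  {g | ∃ X Y Z : UTree, X.leavesPos ∧ Y.leavesPos ∧ Z.leavesPos ∧
    g = Finsupp.single [UTree.node X (UTree.node Y Z)] 1 +
        Finsupp.single [UTree.node Y (UTree.node Z X)] 1 +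
        Finsupp.single [UTree.node Z (UTree.node X Y)] 1}

/-- The two-sided ideal `𝒩 + 𝒥` of `kM` with respect to concatenation. -/
noncomputable def NJideal (k : Type) [Semiring k] : Submodule k ((List UTree) →₀ k) :=
  Submodule.span k {x | ∃ (A B : List UTree) (g : (List UTree) →₀ k),
    (g ∈ NGens k ∨ g ∈ JGens k) ∧
    x = mulCat k (Finsupp.single A (1 : k)) (mulCat k g (Finsupp.single B 1))}

/-! ## Branch relations -/

/-- The two-term branch relation `[a|b][c|d] − [c|d][a|b]`. -/
noncomputable def Rel1 (k : Type) [Ring k] (a b c d : ℕ) : (List (ℕ × ℕ)) →₀ k :=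
  Finsupp.single [(a, b), (c, d)] 1 - Finsupp.single [(c, d), (a, b)] 1

/-- The three-term branch relation
`[a|b][c|d][x|y] + [x|y][a|b][c|d] − [a|b][x|y][c|d] − [c|d][x|y][a|b]`. -/
noncomputable def Rel2 (k : Type) [Ring k] (a b c d x y : ℕ) : (List (ℕ × ℕ)) →₀ k :=
  Finsupp.single [(a, b), (c, d), (x, y)] 1 + Finsupp.single [(x, y), (a, b), (c, d)] 1
  - Finsupp.single [(a, b), (x, y), (c, d)] 1 - Finsupp.single [(c, d), (x, y), (a, b)] 1

/-- The side condition on `a, b, c, d`: positive, `a < b`, `c < d`,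
`a+b ∉ {c,d}` and `c+d ∉ {a,b}`. -/
def Cond1 (a b c d : ℕ) : Prop :=
  0 < a ∧ a < b ∧ 0 < c ∧ c < d ∧ a + b ≠ c ∧ a + b ≠ d ∧ c + d ≠ a ∧ c + d ≠ b

/-- The set `ℛ ⊆ kℬ*` of branch relations. -/
noncomputable def BranchRels (k : Type) [Ring k] : Set ((List (ℕ × ℕ)) →₀ k) :=
  {r | ∃ a b c d, Cond1 a b c d ∧ r = Rel1 k a b c d} ∪
  {r | ∃ a b c d x y, Cond1 a b c d ∧ 0 < x ∧ x < y ∧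
    ((a + b = c + d ∧ (a + b = x ∨ a + b = y)) ∨
      ((x + y = a ∨ x + y = b) ∧ (x + y = c ∨ x + y = d))) ∧
    r = Rel2 k a b c d x y}

/-!
In a labeled forest `X` of positive length the node labeled `1` is a root. Deleting it and
lowering all other labels by one leaves a labeled forest `Y` with `ℓ(Y) = ℓ(X) - 1`, and
`X = A • Y`, where `A` has a single node, labeled `1`, over two leaves carrying the values of the
two trees that hung below it, and one leaf for the value of every other tree of `Y`.
Conversely, if `ℓ(A) = 1` then the node labeled `1` of `A • Y` is the node of `A`, so `A` and
`Y` can be read off from `A • Y`. Induction on the length gives existence and uniqueness.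
-/

namespace LTree

@[simp] theorem value_shift (m : ℕ) : ∀ t : LTree, (t.shift m).value = t.value
  | leaf _ => rfl
  | node _ t1 t2 => by simp [shift, value, value_shift m t1, value_shift m t2]

@[simp] theorem foliage_shift (m : ℕ) : ∀ t : LTree, (t.shift m).foliage = t.foliage
  | leaf _ => rfl
  | node _ t1 t2 => by simp [shift, foliage, foliage_shift m t1, foliage_shift m t2]

@[simp] theorem numNodes_shift (m : ℕ) : ∀ t : LTree, (t.shift m).numNodes = t.numNodes
  | leaf _ => rfl
  | node _ t1 t2 => by simp [shift, numNodes, numNodes_shift m t1, numNodes_shift m t2]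

@[simp] theorem labels_shift (m : ℕ) : ∀ t : LTree, (t.shift m).labels = t.labels.map (· + m)
  | leaf _ => rfl
  | node _ t1 t2 => by simp [shift, labels, labels_shift m t1, labels_shift m t2]

@[simp] theorem dec_shift_one : ∀ t : LTree, (t.shift 1).dec = t
  | leaf _ => rfl
  | node _ t1 t2 => by simp [shift, dec, dec_shift_one t1, dec_shift_one t2]

theorem shift_one_dec : ∀ {t : LTree} {p : ℕ}, t.incrFrom p → t.dec.shift 1 = t
  | leaf _, _, _ => rfl
  | node i _ _, p, ⟨hi, h1, h2⟩ => by
    simp only [dec, shift, shift_one_dec h1, shift_one_dec h2]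
    congr
    omega

theorem incrFrom_shift_iff (m : ℕ) : ∀ {t : LTree} {p : ℕ},
    (t.shift m).incrFrom (p + m) ↔ t.incrFrom p
  | leaf _, _ => Iff.rfl
  | node i t1 t2, p => by
    simp only [shift, incrFrom, incrFrom_shift_iff m (t := t1) (p := i),
      incrFrom_shift_iff m (t := t2) (p := i), Nat.add_lt_add_iff_right]

theorem incrFrom_shift_one_zero_iff {t : LTree} (ht : ∀ j ∈ t.labels, 0 < j) :
    (t.shift 1).incrFrom 0 ↔ t.incrFrom 0 := by
  cases t with
  | leaf _ => exact Iff.rfl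
  | node i t1 t2 =>
    have hi : 0 < i := ht i (by simp [labels])
    simp only [shift, incrFrom, incrFrom_shift_iff 1 (p := i), hi, Nat.zero_lt_succ, true_and]

theorem lt_of_mem_labels : ∀ {t : LTree} {p j : ℕ}, t.incrFrom p → j ∈ t.labels → p < j
  | leaf _, _, _, _, hj => by simp [labels] at hj
  | node i t1 t2, p, j, ⟨hi, h1, h2⟩, hj => by
    simp only [labels, List.mem_cons, List.mem_append] at hj
    rcases hj with rfl | hj | hj
    · exact hi
    · exact hi.trans (lt_of_mem_labels h1 hj)
    · exact hi.trans (lt_of_mem_labels h2 hj)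

theorem exists_eq_node_one {t : LTree} (ht : t.incrFrom 0) (h1 : 1 ∈ t.labels) :
    ∃ t1 t2, t = node 1 t1 t2 := by
  cases t with
  | leaf _ => simp [labels] at h1
  | node i t1 t2 =>
    obtain ⟨hi, ht1, ht2⟩ := ht
    simp only [labels, List.mem_cons, List.mem_append] at h1
    rcases h1 with rfl | h1 | h1
    · exact ⟨t1, t2, rfl⟩
    · exact absurd (lt_of_mem_labels ht1 h1) (by omega)
    · exact absurd (lt_of_mem_labels ht2 h1) (by omega)

theorem value_pos : ∀ {t : LTree}, (∀ x ∈ t.foliage, 0 < x) → 0 < t.value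
  | leaf x, h => h x (by simp [foliage])
  | node _ t1 _, h =>
    (value_pos (t := t1) fun x hx => h x (by simp [foliage, hx])).trans_le (Nat.le_add_right _ _)

theorem eq_leaf_value_of_numNodes_eq_zero : ∀ {t : LTree}, t.numNodes = 0 → t = leaf t.value
  | leaf _, _ => rfl
  | node _ _ _, h => by simp [numNodes] at h

end LTree

open LTree

section ForestSimp

variable (t : LTree) (X Y : List LTree) (m : ℕ)

@[simp] theorem forestLen_cons : forestLen (t :: X) = t.numNodes + forestLen X := by
  simp [forestLen]

@[simp] theorem forestLen_append : forestLen (X ++ Y) = forestLen X + forestLen Y := by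
  simp [forestLen]

@[simp] theorem forestLen_map_shift : forestLen (X.map (shift m)) = forestLen X := by
  simp [forestLen, Function.comp_def]

@[simp] theorem forestFoliage_cons : forestFoliage (t :: X) = t.foliage ++ forestFoliage X := by
  simp [forestFoliage]

@[simp] theorem forestFoliage_append :
    forestFoliage (X ++ Y) = forestFoliage X ++ forestFoliage Y := by
  simp [forestFoliage]

@[simp] theorem forestFoliage_map_shift : forestFoliage (X.map (shift m)) = forestFoliage X := by
  simp [forestFoliage, List.flatMap_map]

@[simp] theorem squash_cons : squash (t :: X) = t.value :: squash X := rfl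

@[simp] theorem squash_append : squash (X ++ Y) = squash X ++ squash Y := List.map_append

@[simp] theorem squash_map_shift : squash (X.map (shift m)) = squash X := by
  simp [squash, Function.comp_def]

@[simp] theorem forestLabels_cons : forestLabels (t :: X) = t.labels ++ forestLabels X := by
  simp [forestLabels]

@[simp] theorem forestLabels_append :
    forestLabels (X ++ Y) = forestLabels X ++ forestLabels Y := by
  simp [forestLabels]

@[simp] theorem forestLabels_map_shift :
    forestLabels (X.map (shift m)) = (forestLabels X).map (· + m) := by
  simp [forestLabels, List.flatMap_map, List.map_flatMap]

end ForestSimp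

@[simp] theorem forestFoliage_leavesOf (c : List ℕ) : forestFoliage (leavesOf c) = c := by
  induction c <;> simp_all [leavesOf, forestFoliage, LTree.foliage]

@[simp] theorem squash_leavesOf (c : List ℕ) : squash (leavesOf c) = c := by
  simp [squash, leavesOf, Function.comp_def, LTree.value]

@[simp] theorem forestLen_leavesOf (c : List ℕ) : forestLen (leavesOf c) = 0 := by
  simp [forestLen, leavesOf, Function.comp_def, LTree.numNodes]

@[simp] theorem forestLabels_leavesOf (c : List ℕ) : forestLabels (leavesOf c) = [] := by
  simp [forestLabels, leavesOf, LTree.labels]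

@[simp] theorem map_shift_leavesOf (m : ℕ) (c : List ℕ) :
    (leavesOf c).map (shift m) = leavesOf c := by
  simp [leavesOf, Function.comp_def, LTree.shift]

theorem eq_leavesOf_squash {Z : List LTree} (h : forestLen Z = 0) : Z = leavesOf (squash Z) := by
  have hZ : ∀ t ∈ Z, t.numNodes = 0 := by simpa [forestLen, List.sum_eq_zero_iff] using h
  conv_lhs => rw [← List.map_id Z]
  simp only [leavesOf, squash, List.map_map]
  exact List.map_congr_left fun t ht => eq_leaf_value_of_numNodes_eq_zero (hZ t ht)

theorem map_shift_one_map_dec {X : List LTree} (hX : ∀ t ∈ X, t.incrFrom 0) :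
    (X.map dec).map (shift 1) = X := by
  rw [List.map_map]
  conv_rhs => rw [← List.map_id X]
  exact List.map_congr_left fun t ht => shift_one_dec (hX t ht)

theorem exists_eq_append_of_squash_eq {Y : List LTree} {c1 c2 : List ℕ} {a b : ℕ}
    (h : squash Y = c1 ++ a :: b :: c2) :
    ∃ Y1 s1 s2 Y2, Y = Y1 ++ s1 :: s2 :: Y2 ∧
      squash Y1 = c1 ∧ s1.value = a ∧ s2.value = b ∧ squash Y2 = c2 := by
  obtain ⟨Y1, Y', rfl, h1, h'⟩ := List.map_eq_append_iff.1 h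
  obtain ⟨s1, Y'', rfl, ha, h''⟩ := List.map_eq_cons_iff.1 h'
  obtain ⟨s2, Y2, rfl, hb, h2⟩ := List.map_eq_cons_iff.1 h''
  exact ⟨Y1, s1, s2, Y2, rfl, h1, ha, hb, h2⟩

theorem graftForest_leavesOf_append {c : List ℕ} {Z : List LTree} (R W : List LTree)
    (h : Z.length = c.length) : graftForest (leavesOf c ++ R) (Z ++ W) = Z ++ graftForest R W := by
  induction c generalizing Z with
  | nil => rw [List.length_eq_zero_iff.1 h]; rfl
  | cons x c ih =>
    obtain ⟨z, Z, rfl⟩ := List.exists_cons_of_length_eq_add_one h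
    exact congrArg (z :: ·) (ih (by simpa using h))

theorem graftForest_leavesOf {c : List ℕ} {Z : List LTree} (h : Z.length = c.length) :
    graftForest (leavesOf c) Z = Z := by
  simpa [graftForest] using graftForest_leavesOf_append [] [] h

theorem pos_of_mem_squash {Y : List LTree} (hY : ∀ x ∈ forestFoliage Y, 0 < x) :
    ∀ x ∈ squash Y, 0 < x := by
  simp only [squash, List.mem_map, forall_exists_index, and_imp, forall_apply_eq_imp_iff₂]
  exact fun t ht => value_pos fun x hx => hY x (List.mem_flatMap.2 ⟨t, ht, hx⟩)

def joinRoots (Y1 : List LTree) (s1 s2 : LTree) (Y2 : List LTree) : List LTree :=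
  Y1.map (shift 1) ++ node 1 (s1.shift 1) (s2.shift 1) :: Y2.map (shift 1)

section joinRoots

variable (Y1 : List LTree) (s1 s2 : LTree) (Y2 : List LTree)

theorem forestLen_joinRoots :
    forestLen (joinRoots Y1 s1 s2 Y2) = forestLen (Y1 ++ s1 :: s2 :: Y2) + 1 := by
  simp only [joinRoots, forestLen_append, forestLen_map_shift, forestLen_cons, numNodes,
    numNodes_shift]
  omega

@[simp] theorem forestFoliage_joinRoots :
    forestFoliage (joinRoots Y1 s1 s2 Y2) = forestFoliage (Y1 ++ s1 :: s2 :: Y2) := by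
  simp [joinRoots, LTree.foliage]

theorem squash_joinRoots :
    squash (joinRoots Y1 s1 s2 Y2) = squash Y1 ++ (s1.value + s2.value) :: squash Y2 := by
  simp [joinRoots, LTree.value]

theorem forestLabels_joinRoots_perm :
    (forestLabels (joinRoots Y1 s1 s2 Y2)).Perm
      (1 :: (forestLabels (Y1 ++ s1 :: s2 :: Y2)).map (· + 1)) := by
  simp only [joinRoots, forestLabels_append, forestLabels_cons, forestLabels_map_shift,
    LTree.labels, labels_shift, List.map_append, List.append_assoc, List.cons_append]
  exact List.perm_middle

theorem isLForest_joinRoots_iff :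
    IsLForest (joinRoots Y1 s1 s2 Y2) ↔ IsLForest (Y1 ++ s1 :: s2 :: Y2) := by
  have hlabels : (forestLabels (joinRoots Y1 s1 s2 Y2)).Perm
      (List.range' 1 (forestLen (joinRoots Y1 s1 s2 Y2))) ↔
      (forestLabels (Y1 ++ s1 :: s2 :: Y2)).Perm
        (List.range' 1 (forestLen (Y1 ++ s1 :: s2 :: Y2))) := by
    rw [(forestLabels_joinRoots_perm Y1 s1 s2 Y2).congr_left, forestLen_joinRoots, List.range'_succ,
      List.perm_cons, List.range'_succ_left, List.map_perm_map_iff (add_left_injective 1)]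
  have hincr (hpos : ∀ t ∈ Y1 ++ s1 :: s2 :: Y2, ∀ j ∈ t.labels, 0 < j) :
      (∀ t ∈ joinRoots Y1 s1 s2 Y2, t.incrFrom 0) ↔
        ∀ t ∈ Y1 ++ s1 :: s2 :: Y2, t.incrFrom 0 := by
    have hshift (t : LTree) : (t.shift 1).incrFrom 1 ↔ t.incrFrom 0 := incrFrom_shift_iff 1
    simp only [joinRoots, List.forall_mem_append, List.forall_mem_cons, List.forall_mem_map,
      LTree.incrFrom, hshift, Nat.zero_lt_one, true_and] at hpos ⊢
    rw [forall₂_congr fun t ht => incrFrom_shift_one_zero_iff (hpos.1 t ht),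
      forall₂_congr fun t ht => incrFrom_shift_one_zero_iff (hpos.2.2.2 t ht), and_assoc]
  unfold IsLForest
  rw [forestFoliage_joinRoots, hlabels]
  refine and_congr_left fun h => hincr fun t ht j hj => ?_
  have hj' := h.1.subset (List.mem_flatMap.2 ⟨t, ht, hj⟩)
  rw [List.mem_range'_1] at hj'
  omega

theorem exists_eq_joinRoots {X : List LTree} (hX : IsLForest X) (hl : 0 < forestLen X) :
    ∃ Y1 s1 s2 Y2, X = joinRoots Y1 s1 s2 Y2 := by
  obtain ⟨hincr, hlab, -⟩ := hX
  obtain ⟨t, ht, h1⟩ :=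
    List.mem_flatMap.1 (hlab.mem_iff.2 (List.mem_range'_1.2 ⟨le_rfl, by omega⟩))
  obtain ⟨t1, t2, rfl⟩ := exists_eq_node_one (hincr t ht) h1
  obtain ⟨X1, X2, rfl⟩ := List.append_of_mem ht
  obtain ⟨-, ht1, ht2⟩ := hincr _ ht
  refine ⟨X1.map dec, t1.dec, t2.dec, X2.map dec, ?_⟩
  rw [joinRoots, map_shift_one_map_dec fun t ht => hincr t (by simp [ht]),
    map_shift_one_map_dec fun t ht => hincr t (by simp [ht]), shift_one_dec ht1, shift_one_dec ht2]

end joinRoots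

def cherryForest (c1 : List ℕ) (a b : ℕ) (c2 : List ℕ) : List LTree :=
  leavesOf c1 ++ node 1 (leaf a) (leaf b) :: leavesOf c2

section cherryForest

variable (c1 : List ℕ) (a b : ℕ) (c2 : List ℕ)

theorem cherryForest_eq_joinRoots :
    cherryForest c1 a b c2 = joinRoots (leavesOf c1) (leaf a) (leaf b) (leavesOf c2) := by
  simp [cherryForest, joinRoots, LTree.shift]

@[simp] theorem forestLen_cherryForest : forestLen (cherryForest c1 a b c2) = 1 := by
  simp [cherryForest, LTree.numNodes]

@[simp] theorem forestFoliage_cherryForest :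
    forestFoliage (cherryForest c1 a b c2) = c1 ++ a :: b :: c2 := by
  simp [cherryForest, LTree.foliage]

@[simp] theorem squash_cherryForest : squash (cherryForest c1 a b c2) = c1 ++ (a + b) :: c2 := by
  simp [cherryForest, LTree.value]

theorem isLForest_cherryForest (h : ∀ x ∈ c1 ++ a :: b :: c2, 0 < x) :
    IsLForest (cherryForest c1 a b c2) := by
  refine ⟨?_, by simp [cherryForest, LTree.labels, LTree.numNodes], by simpa using h⟩
  simp only [cherryForest, leavesOf, List.mem_append, List.mem_map, List.mem_cons]
  rintro t (⟨x, -, rfl⟩ | rfl | ⟨x, -, rfl⟩)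
  exacts [trivial, ⟨Nat.one_pos, trivial, trivial⟩, trivial]

theorem exists_eq_cherryForest {A : List LTree} (hA : IsLForest A) (h1 : forestLen A = 1) :
    ∃ c1 a b c2, A = cherryForest c1 a b c2 := by
  obtain ⟨Z1, z1, z2, Z2, rfl⟩ := exists_eq_joinRoots hA (by omega)
  have h0 : forestLen (Z1 ++ z1 :: z2 :: Z2) = 0 := by rw [forestLen_joinRoots] at h1; omega
  simp only [forestLen_append, forestLen_cons, Nat.add_eq_zero_iff] at h0
  refine ⟨squash Z1, z1.value, z2.value, squash Z2, ?_⟩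
  rw [cherryForest_eq_joinRoots, ← eq_leavesOf_squash h0.1, ← eq_leavesOf_squash h0.2.2.2,
    ← eq_leaf_value_of_numNodes_eq_zero h0.2.1, ← eq_leaf_value_of_numNodes_eq_zero h0.2.2.1]

end cherryForest

theorem bullet_cherryForest (Y1 : List LTree) (s1 s2 : LTree) (Y2 : List LTree) :
    bullet (cherryForest (squash Y1) s1.value s2.value (squash Y2)) (Y1 ++ s1 :: s2 :: Y2) =
      joinRoots Y1 s1 s2 Y2 := by
  rw [bullet, forestLen_cherryForest, cherryForest, List.map_append, List.map_cons, List.map_cons,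
    graftForest_leavesOf_append _ _ (by simp [squash])]
  exact congrArg (_ ++ node 1 _ _ :: ·)
    (graftForest_leavesOf (Z := Y2.map (shift 1)) (by simp [squash]))

def firstFactor : List LTree → List LTree
  | [] => []
  | leaf x :: X => leaf x :: firstFactor X
  | node i t1 t2 :: X =>
    if i = 1 then node 1 (leaf t1.value) (leaf t2.value) :: leavesOf (squash X)
    else leaf (t1.value + t2.value) :: firstFactor X

def restOf : List LTree → List LTree
  | [] => []
  | leaf x :: X => leaf x :: restOf X
  | node i t1 t2 :: X =>
    if i = 1 then t1.dec :: t2.dec :: X.map dec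
    else node (i - 1) t1.dec t2.dec :: restOf X

section firstFactor

variable {t : LTree} (X : List LTree)

theorem firstFactor_shift_one_cons (ht : t.incrFrom 0) :
    firstFactor (t.shift 1 :: X) = leaf t.value :: firstFactor X := by
  cases t with
  | leaf _ => rfl
  | node i _ _ =>
    simp [shift, firstFactor, ht.1.ne', LTree.value]

theorem restOf_shift_one_cons (ht : t.incrFrom 0) : restOf (t.shift 1 :: X) = t :: restOf X := by
  cases t with
  | leaf _ => rfl
  | node i _ _ =>
    simp [shift, restOf, ht.1.ne']

variable {Y1 : List LTree} (s1 s2 : LTree) (Y2 : List LTree)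

theorem firstFactor_joinRoots (hY1 : ∀ t ∈ Y1, t.incrFrom 0) :
    firstFactor (joinRoots Y1 s1 s2 Y2) =
      cherryForest (squash Y1) s1.value s2.value (squash Y2) := by
  induction Y1 with
  | nil => simp [joinRoots, firstFactor, cherryForest, leavesOf, squash]
  | cons t Y1 ih =>
    rw [List.forall_mem_cons] at hY1
    simpa [joinRoots, firstFactor_shift_one_cons _ hY1.1, cherryForest, leavesOf] using ih hY1.2

theorem restOf_joinRoots (hY1 : ∀ t ∈ Y1, t.incrFrom 0) :
    restOf (joinRoots Y1 s1 s2 Y2) = Y1 ++ s1 :: s2 :: Y2 := by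
  induction Y1 with
  | nil => simp [joinRoots, restOf, Function.comp_def]
  | cons t Y1 ih =>
    rw [List.forall_mem_cons] at hY1
    simpa [joinRoots, restOf_shift_one_cons _ hY1.1] using ih hY1.2

end firstFactor

theorem exists_eq_cherryForest_squash {A Y : List LTree} (hA : IsLForest A) (h1 : forestLen A = 1)
    (hAY : forestFoliage A = squash Y) :
    ∃ Y1 s1 s2 Y2, Y = Y1 ++ s1 :: s2 :: Y2 ∧
      A = cherryForest (squash Y1) s1.value s2.value (squash Y2) := by
  obtain ⟨c1, a, b, c2, rfl⟩ := exists_eq_cherryForest hA h1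
  rw [forestFoliage_cherryForest] at hAY
  obtain ⟨Y1, s1, s2, Y2, rfl, rfl, rfl, rfl, rfl⟩ := exists_eq_append_of_squash_eq hAY.symm
  exact ⟨Y1, s1, s2, Y2, rfl, rfl⟩

section bullet

variable {A Y : List LTree}

theorem firstFactor_bullet (hA : IsLForest A) (h1 : forestLen A = 1) (hY : IsLForest Y)
    (hAY : forestFoliage A = squash Y) : firstFactor (bullet A Y) = A := by
  obtain ⟨Y1, s1, s2, Y2, rfl, rfl⟩ := exists_eq_cherryForest_squash hA h1 hAY
  rw [bullet_cherryForest, firstFactor_joinRoots _ _ _ fun t ht => hY.1 t (by simp [ht])]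

theorem restOf_bullet (hA : IsLForest A) (h1 : forestLen A = 1) (hY : IsLForest Y)
    (hAY : forestFoliage A = squash Y) : restOf (bullet A Y) = Y := by
  obtain ⟨Y1, s1, s2, Y2, rfl, rfl⟩ := exists_eq_cherryForest_squash hA h1 hAY
  rw [bullet_cherryForest, restOf_joinRoots _ _ _ fun t ht => hY.1 t (by simp [ht])]

theorem isLForest_bullet (hA : IsLForest A) (h1 : forestLen A = 1) (hY : IsLForest Y)
    (hAY : forestFoliage A = squash Y) : IsLForest (bullet A Y) := by
  obtain ⟨Y1, s1, s2, Y2, rfl, rfl⟩ := exists_eq_cherryForest_squash hA h1 hAY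
  rwa [bullet_cherryForest, isLForest_joinRoots_iff]

theorem squash_bullet (hA : IsLForest A) (h1 : forestLen A = 1)
    (hAY : forestFoliage A = squash Y) : squash (bullet A Y) = squash A := by
  obtain ⟨Y1, s1, s2, Y2, rfl, rfl⟩ := exists_eq_cherryForest_squash hA h1 hAY
  rw [bullet_cherryForest, squash_joinRoots, squash_cherryForest]

end bullet

def IsUnitChain (F : List (List LTree)) : Prop :=
  (∀ A ∈ F, IsLForest A ∧ forestLen A = 1) ∧ F.IsChain fun A B => forestFoliage A = squash B

theorem isUnitChain_singleton {A : List LTree} :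
    IsUnitChain [A] ↔ IsLForest A ∧ forestLen A = 1 := by
  simp [IsUnitChain]

theorem isUnitChain_cons_cons {A B : List LTree} {F : List (List LTree)} :
    IsUnitChain (A :: B :: F) ↔
      (IsLForest A ∧ forestLen A = 1) ∧ forestFoliage A = squash B ∧
        IsUnitChain (B :: F) := by
  simp only [IsUnitChain, List.forall_mem_cons, List.isChain_cons_cons]
  tauto

theorem IsUnitChain.isLForest_chainProd_and_squash :
    ∀ {B : List LTree} {F : List (List LTree)}, IsUnitChain (B :: F) →
      IsLForest (chainProd (B :: F)) ∧ squash (chainProd (B :: F)) = squash B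
  | _, [], h => ⟨(isUnitChain_singleton.1 h).1, rfl⟩
  | _, _ :: _, h => by
    obtain ⟨⟨hB, h1⟩, hBC, hCF⟩ := isUnitChain_cons_cons.1 h
    obtain ⟨hY, hsq⟩ := hCF.isLForest_chainProd_and_squash
    have hBY := hBC.trans hsq.symm
    exact ⟨isLForest_bullet hB h1 hY hBY, squash_bullet hB h1 hBY⟩

def unitFactors : ℕ → List LTree → List (List LTree)
  | 0, X => [X]
  | n + 1, X => firstFactor X :: unitFactors n (restOf X)

@[simp] theorem length_unitFactors :
    ∀ (n : ℕ) (X : List LTree), (unitFactors n X).length = n + 1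
  | 0, _ => rfl
  | n + 1, X => by simp [unitFactors, length_unitFactors n]

theorem exists_unitFactors_eq_cons (n : ℕ) (X : List LTree) :
    ∃ B F, unitFactors n X = B :: F := by
  cases n <;> exact ⟨_, _, rfl⟩

theorem isUnitChain_unitFactors :
    ∀ {n : ℕ} {X : List LTree}, IsLForest X → forestLen X = n + 1 →
      IsUnitChain (unitFactors n X) ∧ chainProd (unitFactors n X) = X
  | 0, _, hX, hlen => ⟨isUnitChain_singleton.2 ⟨hX, hlen⟩, rfl⟩
  | n + 1, X, hX, hlen => by
    obtain ⟨Y1, s1, s2, Y2, rfl⟩ := exists_eq_joinRoots hX (by omega)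
    have hY := (isLForest_joinRoots_iff ..).1 hX
    have hY1 : ∀ t ∈ Y1, t.incrFrom 0 := fun t ht => hY.1 t (by simp [ht])
    rw [forestLen_joinRoots] at hlen
    obtain ⟨hchain, hprod⟩ := isUnitChain_unitFactors (n := n) hY (by omega)
    obtain ⟨B, F, hBF⟩ := exists_unitFactors_eq_cons n (Y1 ++ s1 :: s2 :: Y2)
    rw [hBF] at hchain hprod
    have hpos : ∀ x ∈ squash Y1 ++ s1.value :: s2.value :: squash Y2, 0 < x := by
      simpa using pos_of_mem_squash hY.2.2
    simp only [unitFactors, firstFactor_joinRoots _ _ _ hY1, restOf_joinRoots _ _ _ hY1, hBF]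
    refine ⟨isUnitChain_cons_cons.2 ⟨⟨isLForest_cherryForest _ _ _ _ hpos,
      forestLen_cherryForest ..⟩, ?_, hchain⟩, ?_⟩
    · rw [forestFoliage_cherryForest, ← hchain.isLForest_chainProd_and_squash.2, hprod]
      simp
    · show bullet _ (chainProd (B :: F)) = _
      rw [hprod, bullet_cherryForest]

theorem eq_unitFactors : ∀ {A : List LTree} {F : List (List LTree)}, IsUnitChain (A :: F) →
    A :: F = unitFactors F.length (chainProd (A :: F))
  | _, [], _ => rfl
  | A, B :: F, h => by
    obtain ⟨⟨hA, h1⟩, hAB, hBF⟩ := isUnitChain_cons_cons.1 h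
    obtain ⟨hY, hsq⟩ := hBF.isLForest_chainProd_and_squash
    have hAY := hAB.trans hsq.symm
    show A :: B :: F = firstFactor (bullet A (chainProd (B :: F))) ::
      unitFactors F.length (restOf (bullet A (chainProd (B :: F))))
    rw [firstFactor_bullet hA h1 hY hAY, restOf_bullet hA h1 hY hAY, ← eq_unitFactors hBF]

/-- **Unique factorization (Lemma `UniqueFactorization`).** Every labeled forest of
length at least one admits a unique factorization as a (compatible) product
`X₁ • X₂ • ⋯ • X_l` of labeled forests of length one. -/
theorem unique_factorization_of_labeled_forests
    (X : List LTree) (hX : IsLForest X) (hl : 1 ≤ forestLen X) :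
    ∃! F : List (List LTree),
      F.length = forestLen X ∧
      (∀ A ∈ F, IsLForest A ∧ forestLen A = 1) ∧
      List.Chain' (fun A B => forestFoliage A = squash B) F ∧
      X = chainProd F := by
  refine ⟨unitFactors (forestLen X - 1) X, ?_, ?_⟩
  · obtain ⟨⟨hunit, hchain⟩, hprod⟩ :=
      isUnitChain_unitFactors (n := forestLen X - 1) hX (by omega)
    exact ⟨by simp; omega, hunit, hchain, hprod.symm⟩
  · rintro F ⟨hlen, hunit, hchain, rfl⟩
    obtain ⟨A, F, rfl⟩ := List.exists_cons_of_length_pos (l := F) (by omega)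
    rw [← hlen, List.length_cons, Nat.add_sub_cancel]
    exact eq_unitFactors ⟨hunit, hchain⟩
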